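/- In Picaria, let c be the configuration with c(0,2) = X, c(1,0) = X, c(1,1) = O, c(1,2) = O, c(2,0) = O, c(2,2) = X and all other cells empty. Then the state (c, O) with O to move is not in WinningFor X; that is, from this position O can force the game back to the same position without ever allowing X a three-in-a-row, so X cannot win. -/

import Mathlib

/-- The two players of Picaria. -/
inductive Player : Type
  | X : Player
  | O : Player
deriving DecidableEq

instance instFintypePlayer : Fintype Player :=
  ⟨{Player.X, Player.O}, fun x => by cases x <;> simp⟩

/-- The opponent of a player. -/
def Player.other : Player → Player
  | Player.X => Player.O
  | Player.O => Player.X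

/-- A cell of the 3×3 board, written (row, column), 0-indexed. -/
abbrev Cell : Type := Fin 3 × Fin 3

/-- A configuration assigns to each cell an optional stone. -/
abbrev Config : Type := Cell → Option Player

/-- King-move adjacency on the board: distinct cells whose coordinates
differ by at most 1 each. -/
def adjacent (a b : Cell) : Prop :=
  a ≠ b ∧ |((a.1 : ℕ) : ℤ) - ((b.1 : ℕ) : ℤ)| ≤ 1 ∧
    |((a.2 : ℕ) : ℤ) - ((b.2 : ℕ) : ℤ)| ≤ 1

/-- The 8 lines of the board: 3 rows, 3 columns, 2 main diagonals. -/
def lines : List (Cell × Cell × Cell) :=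
  [((0,0),(0,1),(0,2)), ((1,0),(1,1),(1,2)), ((2,0),(2,1),(2,2)),
   ((0,0),(1,0),(2,0)), ((0,1),(1,1),(2,1)), ((0,2),(1,2),(2,2)),
   ((0,0),(1,1),(2,2)), ((0,2),(1,1),(2,0))]

/-- Player `p` has three-in-a-row in configuration `c`. -/
def threeInARow (c : Config) (p : Player) : Prop :=
  ∃ l ∈ lines, c l.1 = some p ∧ c l.2.1 = some p ∧ c l.2.2 = some p

/-- The number of stones of player `p` on the board. -/
def stoneCount (c : Config) (p : Player) : ℕ :=
  (Finset.univ.filter fun x : Cell => c x = some p).card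

/-- Legal moves of player `t` from configuration `c`, producing `c'`:
placement on an empty cell while `t` has fewer than 3 stones on the board;
otherwise a slide of one of `t`'s stones to an adjacent empty cell. -/
def Move (t : Player) (c c' : Config) : Prop :=
  (stoneCount c t < 3 ∧ ∃ x : Cell, c x = none ∧ c' = Function.update c x (some t)) ∨
  (3 ≤ stoneCount c t ∧ ∃ x y : Cell, c x = some t ∧ c y = none ∧ adjacent x y ∧
    c' = Function.update (Function.update c x none) y (some t))

/-- `WinningFor p` is the least set of states (configuration, player to move) such that:
(i) `(c, p)` is winning for `p` if some legal move of `p` immediately makes a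
three-in-a-row for `p`, or leads to a state winning for `p`;
(ii) `(c, q)` (for `q` the opponent of `p`) is winning for `p` if `q` has at least one
legal move, and every legal move of `q` yields a configuration with no three-in-a-row
for `q` together with a state winning for `p`. -/
inductive WinningFor (p : Player) : Config × Player → Prop
  | moveWin (c c' : Config) (h : Move p c c') (hw : threeInARow c' p) :
      WinningFor p (c, p)
  | moveStep (c c' : Config) (h : Move p c c') (hw : WinningFor p (c', p.other)) :
      WinningFor p (c, p)
  | forced (c : Config) (hne : ∃ c', Move p.other c c')
      (hnowin : ∀ c', Move p.other c c' → ¬ threeInARow c' p.other)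
      (hall : ∀ c', Move p.other c c' → WinningFor p (c', p)) :
      WinningFor p (c, p.other)
/-- The dual Loop configuration, with the roles of X and O interchanged. -/
def c3 : Config := fun x =>
  if x = ((0 : Fin 3), (2 : Fin 3)) then some Player.X
  else if x = ((1 : Fin 3), (0 : Fin 3)) then some Player.X
  else if x = ((1 : Fin 3), (1 : Fin 3)) then some Player.O
  else if x = ((1 : Fin 3), (2 : Fin 3)) then some Player.O
  else if x = ((2 : Fin 3), (0 : Fin 3)) then some Player.O
  else if x = ((2 : Fin 3), (2 : Fin 3)) then some Player.X
  else none

section Aux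
open Player

instance decEqConfig : DecidableEq Config := fun a b => Fintype.decidablePiFintype a b

instance decAdj (a b : Cell) : Decidable (adjacent a b) := by
  unfold adjacent; infer_instance

instance decThree (c : Config) (p : Player) : Decidable (threeInARow c p) := by
  unfold threeInARow; infer_instance

/-- Build a configuration from a row-major list of 9 cells. -/
def cfg (l : List (Option Player)) : Config := fun x => l.getD (x.1.val * 3 + x.2.val) none

def cfg0 : Config := cfg [none, none, some Player.X, none, some Player.O, some Player.O, some Player.X, some Player.O, some Player.X]
def cfg1 : Config := cfg [none, none, some Player.X, some Player.X, some Player.O, some Player.O, some Player.O, none, some Player.X]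
def cfg2 : Config := cfg [none, some Player.X, none, none, some Player.O, some Player.O, some Player.O, some Player.X, some Player.X]
def cfg3 : Config := cfg [none, some Player.X, none, some Player.X, some Player.O, some Player.O, none, some Player.O, some Player.X]
def cfg4 : Config := cfg [none, some Player.X, none, some Player.X, some Player.O, some Player.O, some Player.O, some Player.X, none]
def cfg5 : Config := cfg [none, some Player.X, some Player.X, none, some Player.O, some Player.O, none, some Player.O, some Player.X]
def cfg6 : Config := cfg [some Player.X, none, none, some Player.X, some Player.O, some Player.O, some Player.O, none, some Player.X]
def cfg7 : Config := cfg [some Player.X, none, some Player.X, none, some Player.O, some Player.O, none, some Player.O, some Player.X]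
def cfg8 : Config := cfg [some Player.X, some Player.X, none, none, some Player.O, some Player.O, some Player.O, none, some Player.X]
def cfg9 : Config := cfg [none, none, some Player.X, some Player.X, some Player.O, some Player.O, none, some Player.O, some Player.X]
def cfg10 : Config := cfg [none, some Player.X, none, some Player.X, some Player.O, some Player.O, some Player.O, none, some Player.X]

/-- The invariant strategy set. -/
def S (s : Config × Player) : Prop :=
  s = (cfg0, Player.O) ∨ s = (cfg1, Player.O) ∨ s = (cfg2, Player.O) ∨
  s = (cfg3, Player.O) ∨ s = (cfg4, Player.O) ∨ s = (cfg5, Player.O) ∨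
  s = (cfg6, Player.O) ∨ s = (cfg7, Player.O) ∨ s = (cfg8, Player.O) ∨
  s = (cfg9, Player.X) ∨ s = (cfg10, Player.X)

instance decS (s : Config × Player) : Decidable (S s) := by
  unfold S; infer_instance

/-- Every X move from cfg9 or cfg10 avoids three-in-a-row for X and stays in S. -/
lemma xclosure (b : Config) (hb : b = cfg9 ∨ b = cfg10) (c' : Config)
    (h : Move Player.X b c') :
    ¬ threeInARow c' Player.X ∧ S (c', Player.O) := by
  rcases h with ⟨hlt, -⟩ | ⟨-, x, y, hx, hy, hadj, rfl⟩
  · exfalso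
    rcases hb with rfl | rfl
    · exact absurd hlt (by decide)
    · exact absurd hlt (by decide)
  · rcases hb with rfl | rfl
    · revert hx hy hadj
      revert x y
      decide
    · revert hx hy hadj
      revert x y
      decide

lemma oMove (c : Config) (x y : Cell) (hc : 3 ≤ stoneCount c Player.O)
    (hx : c x = some Player.O) (hy : c y = none) (ha : adjacent x y) :
    Move Player.O c (Function.update (Function.update c x none) y (some Player.O)) :=
  Or.inr ⟨hc, x, y, hx, hy, ha, rfl⟩

lemma main (s : Config × Player) (h : WinningFor Player.X s) : ¬ S s := by
  induction h with
  | moveWin c c' hm hw =>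
      intro hS
      have hb : c = cfg9 ∨ c = cfg10 := by
        rcases hS with h|h|h|h|h|h|h|h|h|h|h <;>
          simp only [Prod.mk.injEq] at h <;>
          first
            | exact absurd h.2 (by decide)
            | exact Or.inl h.1
            | exact Or.inr h.1
      exact (xclosure c hb c' hm).1 hw
  | moveStep c c' hm hw ih =>
      intro hS
      have hb : c = cfg9 ∨ c = cfg10 := by
        rcases hS with h|h|h|h|h|h|h|h|h|h|h <;>
          simp only [Prod.mk.injEq] at h <;>
          first
            | exact absurd h.2 (by decide)
            | exact Or.inl h.1
            | exact Or.inr h.1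
      exact ih ((xclosure c hb c' hm).2)
  | forced c hne hnowin hall ih =>
      intro hS
      rcases hS with h|h|h|h|h|h|h|h|h|h|h <;>
        simp only [Prod.mk.injEq] at h <;>
        [ (obtain ⟨rfl, -⟩ := h;
           exact hnowin _ (oMove cfg0 (1,2) (0,1) (by decide) (by decide) (by decide) (by decide)) (by decide));
          (obtain ⟨rfl, -⟩ := h;
           exact ih _ (oMove cfg1 (2,0) (2,1) (by decide) (by decide) (by decide) (by decide)) (by decide));
          (obtain ⟨rfl, -⟩ := h;
           exact hnowin _ (oMove cfg2 (1,2) (0,2) (by decide) (by decide) (by decide) (by decide)) (by decide));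
          (obtain ⟨rfl, -⟩ := h;
           exact ih _ (oMove cfg3 (2,1) (2,0) (by decide) (by decide) (by decide) (by decide)) (by decide));
          (obtain ⟨rfl, -⟩ := h;
           exact hnowin _ (oMove cfg4 (1,2) (0,2) (by decide) (by decide) (by decide) (by decide)) (by decide));
          (obtain ⟨rfl, -⟩ := h;
           exact hnowin _ (oMove cfg5 (2,1) (1,0) (by decide) (by decide) (by decide) (by decide)) (by decide));
          (obtain ⟨rfl, -⟩ := h;
           exact hnowin _ (oMove cfg6 (1,2) (0,2) (by decide) (by decide) (by decide) (by decide)) (by decide));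
          (obtain ⟨rfl, -⟩ := h;
           exact hnowin _ (oMove cfg7 (1,2) (0,1) (by decide) (by decide) (by decide) (by decide)) (by decide));
          (obtain ⟨rfl, -⟩ := h;
           exact hnowin _ (oMove cfg8 (1,2) (0,2) (by decide) (by decide) (by decide) (by decide)) (by decide));
          exact absurd h.2 (by decide);
          exact absurd h.2 (by decide) ]

end Aux

/-- With O to move from the dual Loop position, O can force the game back to the same
position without ever allowing X a three-in-a-row, so X cannot win. -/
theorem picaria_O_loop_X_cannot_win : ¬ WinningFor Player.X (c3, Player.O) := by
  intro h
  exact main _ h (by unfold S; decide)
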